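/- arXiv:1904.05704 — 7 statements merged into one kernel-verified Lean document; each statement's English description precedes it below -/
import Mathlib

section
/- Let p, q, τ be real numbers with τ > 0. All complex roots λ of the equation λ + p + q e^{-λτ} = 0 have negative real part if and only if either (-p < q ≤ p), or (|p| < q and 0 < τ < (1/√(q² - p²))·arccos(-p/q)). -/
/-!
Write a root as `z = x + iy` and put `r = q e^{-xτ}`, so that `x + p = -r cos (yτ)` and
`y = r sin (yτ)`; let `θ = arccos (-p/q)`.

If `-p < q ≤ p` and `x ≥ 0`, then `x + p ≤ |r| ≤ p` forces `x = 0`, and then `y = 0`, `p + q = 0`.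
If `|p| < q`, `τ √(q² - p²) < θ` and `x ≥ 0`, then `1 + pτ > 0`, so `p e^{-xτ} ≤ x + p` and hence
`cos (yτ) ≤ cos θ`. Reducing `yτ` modulo `2π` into `[θ, π)`, where `sin u / u` decreases, the
relation `y = r sin (yτ) ≤ q sin (yτ)` gives `θ ≤ τ √(q² - p²)`, a contradiction.

Conversely, if `q ≤ -p` the real function `x + p + q e^{-xτ}` vanishes somewhere on `[0, ∞)`.
If `|p| < q` and `θ ≤ τ √(q² - p²)`, put `c = (x + p) / r` and
`H(x) = τ r sin (arccos (-c)) - arccos (-c)`: `H(0) ≥ 0` and `H(q - p) = -π`, and at a zero of `H`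
the point `x + i arccos (-c) / τ` is a root, unless `c < -1`, where a real root `≥ x` exists.
-/

open Real Set

lemma mul_cos_le_sin {θ : ℝ} (h₀ : 0 ≤ θ) (hπ : θ ≤ π) : θ * cos θ ≤ sin θ := by
  rcases h₀.eq_or_lt with rfl | h₀
  · simp
  have := strictConcaveOn_sin_Icc.concaveOn.le_slope_of_hasDerivAt
    (left_mem_Icc.2 pi_pos.le) ⟨h₀.le, hπ⟩ h₀ (hasDerivAt_sin θ)
  rw [slope_def_field, sin_zero, sub_zero, sub_zero, le_div_iff₀ h₀] at this
  linarith

lemma sin_div_antitoneOn : AntitoneOn (fun x => sin x / x) (Ioc 0 π) := by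
  intro a ha b hb hab
  have := strictConcaveOn_sin_Icc.concaveOn.antitoneOn_slope_gt (left_mem_Icc.2 pi_pos.le)
    ⟨Ioc_subset_Icc_self ha, ha.1⟩ ⟨Ioc_subset_Icc_self hb, hb.1⟩ hab
  simpa [slope_def_field] using this

lemma sin_div_le_sin_div_of_cos_le {u θ : ℝ} (hu : 0 < u) (hsin : 0 < sin u)
    (hθ₀ : 0 < θ) (hθπ : θ ≤ π) (hcos : cos u ≤ cos θ) : sin u / u ≤ sin θ / θ := by
  set n := ⌊u / (2 * π)⌋
  set v := u - n * (2 * π)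
  have h2π : 0 < 2 * π := by positivity
  have hn : 0 ≤ (n : ℝ) := Int.cast_nonneg (Int.floor_nonneg.2 (by positivity))
  have hvu : v ≤ u := by simp only [v]; nlinarith
  have hv2π : v < 2 * π := by
    have := Int.lt_floor_add_one (u / (2 * π))
    rw [div_lt_iff₀ h2π] at this
    simp only [v]; linarith
  have hsinv : sin v = sin u := sin_sub_int_mul_two_pi u n
  have hcosv : cos v = cos u := cos_sub_int_mul_two_pi u n
  have hv₀ : 0 < v := by
    have := Int.floor_le (u / (2 * π))
    rw [le_div_iff₀ h2π] at this
    refine (show 0 ≤ v by simp only [v]; linarith).lt_of_ne fun h => ?_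
    rw [← h, sin_zero] at hsinv
    linarith
  have hvπ : v ≤ π := by
    by_contra! h
    have := sin_nonpos_of_nonpos_of_neg_pi_le (x := v - 2 * π) (by linarith) (by linarith)
    rw [sin_sub_two_pi] at this
    linarith
  have hθv : θ ≤ v :=
    (strictAntiOn_cos.le_iff_ge ⟨hv₀.le, hvπ⟩ ⟨hθ₀.le, hθπ⟩).1 (hcosv ▸ hcos)
  calc sin u / u ≤ sin v / v := by
        rw [hsinv]; exact div_le_div_of_nonneg_left hsin.le hv₀ hvu
    _ ≤ sin θ / θ := sin_div_antitoneOn ⟨hθ₀, hθπ⟩ ⟨hv₀, hvπ⟩ hθv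

lemma abs_neg_div_lt_one {p q : ℝ} (hpq : |p| < q) : |-(p / q)| < 1 := by
  have hq : 0 < q := (abs_nonneg p).trans_lt hpq
  rwa [abs_neg, abs_div, abs_of_pos hq, div_lt_one hq]

lemma mul_sin_arccos_neg_div {q : ℝ} (hq : 0 < q) (p : ℝ) :
    q * sin (arccos (-(p / q))) = √(q ^ 2 - p ^ 2) := by
  have : q ^ 2 - p ^ 2 = q ^ 2 * (1 - (-(p / q)) ^ 2) := by field_simp
  rw [this, sqrt_mul (sq_nonneg q), sqrt_sq hq.le, sin_arccos]

lemma one_add_mul_pos_of_lt_arccos {p q τ : ℝ} (hτ : 0 ≤ τ) (hpq : |p| < q)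
    (h : τ * √(q ^ 2 - p ^ 2) < arccos (-(p / q))) : 0 < 1 + p * τ := by
  rcases le_or_gt 0 p with hp | hp
  · positivity
  have hq : 0 < q := (abs_nonneg p).trans_lt hpq
  have hω : 0 < √(q ^ 2 - p ^ 2) := sqrt_pos.2 (by nlinarith [abs_lt.1 hpq])
  obtain ⟨hc₁, hc₂⟩ := abs_lt.1 (abs_neg_div_lt_one hpq)
  set θ := arccos (-(p / q))
  have hθ : -p * θ ≤ √(q ^ 2 - p ^ 2) := calc
    -p * θ = q * (θ * cos θ) := by rw [cos_arccos hc₁.le hc₂.le]; field_simp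
    _ ≤ q * sin θ := by gcongr; exact mul_cos_le_sin (arccos_nonneg _) (arccos_le_pi _)
    _ = √(q ^ 2 - p ^ 2) := mul_sin_arccos_neg_div hq p
  nlinarith [mul_lt_mul_of_pos_left h (neg_pos.2 hp)]

lemma mul_exp_le_add {p τ x : ℝ} (hτ : 0 ≤ τ) (hx : 0 ≤ x) (h : 0 ≤ 1 + p * τ) :
    p * exp (-x * τ) ≤ x + p := by
  rcases le_or_gt 0 p with hp | hp
  · have : exp (-x * τ) ≤ 1 := exp_le_one_iff.2 (by nlinarith)
    nlinarith
  · have := add_one_le_exp (-x * τ)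
    nlinarith

lemma char_eq_zero_iff (p q τ x y : ℝ) :
    (⟨x, y⟩ : ℂ) + p + q * Complex.exp (-⟨x, y⟩ * τ) = 0 ↔
      x + p + q * exp (-x * τ) * cos (y * τ) = 0 ∧ y = q * exp (-x * τ) * sin (y * τ) := by
  have hre : (-(⟨x, y⟩ : ℂ) * τ).re = -x * τ := by simp
  have him : (-(⟨x, y⟩ : ℂ) * τ).im = -(y * τ) := by simp
  simp only [Complex.ext_iff, Complex.add_re, Complex.add_im, Complex.mul_re, Complex.mul_im,
    Complex.exp_re, Complex.exp_im, Complex.ofReal_re, Complex.ofReal_im, hre, him, cos_neg,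
    sin_neg, Complex.zero_re, Complex.zero_im]
  constructor <;> rintro ⟨h₁, h₂⟩ <;> constructor <;> linarith

lemma char_components_abs {p r τ x y : ℝ}
    (h : x + p + r * cos (y * τ) = 0 ∧ y = r * sin (y * τ)) :
    x + p + r * cos (|y| * τ) = 0 ∧ |y| = r * sin (|y| * τ) := by
  rcases abs_cases y with ⟨hy, -⟩ | ⟨hy, -⟩
  · rwa [hy]
  · rw [hy, neg_mul, cos_neg, sin_neg]
    exact ⟨h.1, by linarith [h.2]⟩

lemma neg_of_char_eq_zero_of_neg_lt_of_le {p q τ x y : ℝ} (hτ : 0 ≤ τ) (h₁ : -p < q) (h₂ : q ≤ p)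
    (E₁ : x + p + q * exp (-x * τ) * cos (y * τ) = 0) (E₂ : y = q * exp (-x * τ) * sin (y * τ)) :
    x < 0 := by
  by_contra! hx
  have he : exp (-x * τ) ≤ 1 := exp_le_one_iff.2 (by nlinarith)
  have hqe : |q * exp (-x * τ) * cos (y * τ)| ≤ p := calc
    _ = |q| * exp (-x * τ) * |cos (y * τ)| := by rw [abs_mul, abs_mul, abs_of_pos (exp_pos _)]
    _ ≤ |q| * 1 * 1 := by gcongr; exact abs_cos_le_one _
    _ ≤ p := by rw [mul_one, mul_one]; exact abs_le.2 ⟨by linarith, h₂⟩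
  obtain rfl : x = 0 := by linarith [neg_abs_le (q * exp (-x * τ) * cos (y * τ))]
  rw [neg_zero, zero_mul, exp_zero, mul_one] at E₁ E₂
  have hy2 : y ^ 2 = q ^ 2 - p ^ 2 := by
    linear_combination (y + q * sin (y * τ)) * E₂ + q ^ 2 * sin_sq_add_cos_sq (y * τ) +
      (p - q * cos (y * τ)) * E₁
  have hy : y ^ 2 ≤ 0 := by nlinarith
  rw [pow_eq_zero_iff two_ne_zero |>.1 (le_antisymm hy (sq_nonneg _)), zero_mul, cos_zero] at E₁
  linarith

lemma neg_of_char_eq_zero_of_lt_arccos {p q τ x y : ℝ} (hτ : 0 < τ) (hpq : |p| < q)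
    (h : τ * √(q ^ 2 - p ^ 2) < arccos (-(p / q)))
    (E₁ : x + p + q * exp (-x * τ) * cos (y * τ) = 0) (E₂ : y = q * exp (-x * τ) * sin (y * τ)) :
    x < 0 := by
  wlog hy : 0 ≤ y generalizing y
  · obtain ⟨E₁', E₂'⟩ := char_components_abs ⟨E₁, E₂⟩
    exact this E₁' E₂' (abs_nonneg y)
  by_contra! hx
  have hq : 0 < q := (abs_nonneg p).trans_lt hpq
  obtain ⟨hc₁, hc₂⟩ := abs_lt.1 (abs_neg_div_lt_one hpq)
  set θ := arccos (-(p / q))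
  have hθ₀ : 0 < θ := arccos_pos.2 hc₂
  have hcosθ : cos θ = -(p / q) := cos_arccos hc₁.le hc₂.le
  have he₀ : 0 < exp (-x * τ) := exp_pos _
  have he₁ : exp (-x * τ) ≤ 1 := exp_le_one_iff.2 (by nlinarith)
  have hcos : cos (y * τ) ≤ cos θ := by
    have := mul_exp_le_add hτ.le hx (one_add_mul_pos_of_lt_arccos hτ.le hpq h).le
    rw [hcosθ, ← neg_div, le_div_iff₀ hq]
    refine le_of_mul_le_mul_right ?_ he₀
    linarith
  have hy₀ : 0 < y := by
    refine hy.lt_of_ne fun hy₀ => ?_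
    rw [← hy₀, zero_mul, cos_zero, hcosθ] at hcos
    linarith
  have hsin : 0 < sin (y * τ) := by
    by_contra! hsin
    nlinarith [mul_pos hq he₀]
  have hu : y * τ ≤ τ * q * sin (y * τ) := by
    calc y * τ = τ * q * exp (-x * τ) * sin (y * τ) := by nth_rw 1 [E₂]; ring
      _ ≤ τ * q * 1 * sin (y * τ) := by gcongr
      _ = _ := by ring
  have key := sin_div_le_sin_div_of_cos_le (mul_pos hy₀ hτ) hsin hθ₀ (arccos_le_pi _) hcos
  rw [div_le_div_iff₀ (mul_pos hy₀ hτ) hθ₀] at key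
  have : θ * (y * τ) ≤ τ * √(q ^ 2 - p ^ 2) * (y * τ) := by
    calc θ * (y * τ) ≤ θ * (τ * q * sin (y * τ)) := by gcongr
      _ = τ * q * (sin (y * τ) * θ) := by ring
      _ ≤ τ * q * (sin θ * (y * τ)) := by gcongr
      _ = τ * √(q ^ 2 - p ^ 2) * (y * τ) := by rw [← mul_sin_arccos_neg_div hq p]; ring
  linarith [le_of_mul_le_mul_right this (mul_pos hy₀ hτ)]

lemma exists_root_re_nonneg_of_nonpos {p q τ x₀ : ℝ} (hτ : 0 ≤ τ) (hx₀ : 0 ≤ x₀)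
    (h : x₀ + p + q * exp (-x₀ * τ) ≤ 0) :
    ∃ z : ℂ, 0 ≤ z.re ∧ z + p + q * Complex.exp (-z * τ) = 0 := by
  set M := x₀ + |p| + |q| + 1
  have hM : 0 < M + p + q * exp (-M * τ) := by
    have he : exp (-M * τ) ≤ 1 := exp_le_one_iff.2 (by nlinarith [abs_nonneg p, abs_nonneg q])
    have : -|q| ≤ q * exp (-M * τ) := by
      nlinarith [neg_abs_le q, abs_nonneg q, exp_pos (-M * τ)]
    linarith [neg_abs_le p]
  obtain ⟨x, ⟨hx, -⟩, hroot⟩ := intermediate_value_Icc (by linarith [abs_nonneg p, abs_nonneg q])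
    (by fun_prop : Continuous fun x => x + p + q * exp (-x * τ)).continuousOn ⟨h, hM.le⟩
  exact ⟨⟨x, 0⟩, hx₀.trans hx, (char_eq_zero_iff p q τ x 0).2 ⟨by simpa using hroot, by simp⟩⟩

lemma exists_root_re_nonneg_of_arccos_le {p q τ : ℝ} (hτ : 0 < τ) (hpq : |p| < q)
    (h : arccos (-(p / q)) ≤ τ * √(q ^ 2 - p ^ 2)) :
    ∃ z : ℂ, 0 ≤ z.re ∧ z + p + q * Complex.exp (-z * τ) = 0 := by
  have hq : 0 < q := (abs_nonneg p).trans_lt hpq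
  set c : ℝ → ℝ := fun x => (x + p) * exp (x * τ) / q
  set H : ℝ → ℝ := fun x => τ * (q * exp (-x * τ)) * sin (arccos (-c x)) - arccos (-c x)
  have hH : Continuous H := by fun_prop
  have hH₀ : 0 ≤ H 0 := by
    simp only [H, c, zero_add, neg_mul, zero_mul, neg_zero, exp_zero, mul_one]
    rw [mul_assoc, mul_sin_arccos_neg_div hq p]
    linarith
  have hH₁ : H (q - p) ≤ 0 := by
    have : 1 ≤ c (q - p) := by
      simp only [c, sub_add_cancel, mul_div_cancel_left₀ _ hq.ne']
      exact one_le_exp (mul_nonneg (by linarith [le_abs_self p]) hτ.le)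
    simp only [H, arccos_of_le_neg_one (neg_le_neg this), sin_pi]
    linarith [pi_pos]
  obtain ⟨x, ⟨hx₀, -⟩, hx⟩ := intermediate_value_Icc' (by linarith [le_abs_self p])
    hH.continuousOn ⟨hH₁, hH₀⟩
  have hrc : q * exp (-x * τ) * c x = x + p := by
    simp only [c]
    field_simp
    rw [mul_right_comm, ← exp_add, neg_add_cancel, exp_zero, one_mul]
  rcases lt_or_ge (c x) (-1) with hc₁ | hc₁
  · exact exists_root_re_nonneg_of_nonpos hτ.le hx₀ (by nlinarith [mul_pos hq (exp_pos (-x * τ))])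
  rcases le_or_gt (c x) 1 with hc₂ | hc₂
  · refine ⟨⟨x, arccos (-c x) / τ⟩, hx₀, (char_eq_zero_iff _ _ _ _ _).2 ⟨?_, ?_⟩⟩
    · rw [div_mul_cancel₀ _ hτ.ne', cos_arccos (by linarith) (by linarith)]
      linarith
    · rw [div_mul_cancel₀ _ hτ.ne', div_eq_iff hτ.ne']
      linarith
  · simp only [H, arccos_of_le_neg_one (neg_le_neg hc₂.le), sin_pi] at hx
    linarith [pi_pos]

theorem stmt_2 (p q τ : ℝ) (hτ : 0 < τ) :
    (∀ z : ℂ, z + p + q * Complex.exp (-z * τ) = 0 → z.re < 0) ↔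
      (-p < q ∧ q ≤ p) ∨
        (|p| < q ∧ 0 < τ ∧
          τ < 1 / Real.sqrt (q ^ 2 - p ^ 2) * Real.arccos (-(p / q))) := by
  have threshold_iff (hpq : |p| < q) : τ < 1 / √(q ^ 2 - p ^ 2) * arccos (-(p / q)) ↔
      τ * √(q ^ 2 - p ^ 2) < arccos (-(p / q)) := by
    rw [one_div_mul_eq_div, lt_div_iff₀ (sqrt_pos.2 (by nlinarith [abs_lt.1 hpq]))]
  constructor
  · intro hstable
    by_contra hcond
    obtain ⟨z, hz₀, hz⟩ : ∃ z : ℂ, 0 ≤ z.re ∧ z + p + q * Complex.exp (-z * τ) = 0 := by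
      rcases le_or_gt q (-p) with hqp | hqp
      · refine exists_root_re_nonneg_of_nonpos hτ.le le_rfl ?_
        rw [zero_add, neg_zero, zero_mul, exp_zero, mul_one]
        linarith
      have hpq : |p| < q := abs_lt.2 ⟨by linarith, lt_of_not_ge fun h => hcond (.inl ⟨hqp, h⟩)⟩
      exact exists_root_re_nonneg_of_arccos_le hτ hpq
        (le_of_not_gt fun h => hcond (.inr ⟨hpq, hτ, (threshold_iff hpq).2 h⟩))
    exact (hstable z hz).not_ge hz₀
  · rintro hcond z hz
    obtain ⟨E₁, E₂⟩ := (char_eq_zero_iff p q τ z.re z.im).1 hz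
    rcases hcond with ⟨h₁, h₂⟩ | ⟨hpq, -, h⟩
    · exact neg_of_char_eq_zero_of_neg_lt_of_le hτ.le h₁ h₂ E₁ E₂
    · exact neg_of_char_eq_zero_of_lt_arccos hτ hpq ((threshold_iff hpq).1 h) E₁ E₂
end

section
/- Suppose α ≠ 0, bc < 0, and α² ≥ a². If λ = iω with ω ∈ ℝ and τ ≥ 0 satisfy iω + α e^{-iωτ} + a + i d = 0 where d = √(-bc), then ω = -d - √(α² - a²) or ω = -d + √(α² - a²). -/
/-!
On the imaginary axis the real and imaginary parts of the characteristic equation read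
`α cos ωτ = -a` and `α sin ωτ = ω + d`; squaring and adding eliminates `τ` and leaves
`(ω + d)² = α² - a²`.
-/

open Complex

lemma Real.eq_neg_sqrt_or_eq_sqrt_of_sq_eq {x y : ℝ} (h : x ^ 2 = y) : x = -√y ∨ x = √y := by
  rw [← h, Real.sqrt_sq_eq_abs]
  rcases abs_choice x with hx | hx <;> [right; left] <;> linarith

lemma cos_sin_of_imaginary_root {a α d ω τ : ℝ}
    (h : I * ω + α * exp (-(I * ω) * τ) + a + I * d = 0) :
    α * Real.cos (ω * τ) + a = 0 ∧ ω + d = α * Real.sin (ω * τ) := by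
  have hre := congrArg re h
  have him := congrArg im h
  simp only [neg_mul, add_re, mul_re, I_re, ofReal_re, zero_mul, I_im, ofReal_im, mul_zero,
    sub_self, exp_re, neg_re, mul_im, one_mul, zero_add, neg_zero, Real.exp_zero, neg_im,
    Real.cos_neg, exp_im, Real.sin_neg, mul_neg, sub_zero, add_zero, zero_re, add_im, zero_im]
    at hre him
  constructor <;> linarith

lemma add_sq_eq_of_imaginary_root {a α d ω τ : ℝ}
    (h : I * ω + α * exp (-(I * ω) * τ) + a + I * d = 0) :
    (ω + d) ^ 2 = α ^ 2 - a ^ 2 := by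
  obtain ⟨hcos, hsin⟩ := cos_sin_of_imaginary_root h
  rw [hsin, eq_neg_of_add_eq_zero_right hcos]
  linear_combination α ^ 2 * Real.sin_sq_add_cos_sq (ω * τ)

theorem stmt_3_general (a α : ℝ)
    (d : ℝ)
    (ω τ : ℝ)
    (heq : Complex.I * ω + α * Complex.exp (-(Complex.I * ω) * τ) + a + Complex.I * d = 0) :
    ω = -d - Real.sqrt (α ^ 2 - a ^ 2) ∨ ω = -d + Real.sqrt (α ^ 2 - a ^ 2) := by
  rcases Real.eq_neg_sqrt_or_eq_sqrt_of_sq_eq (add_sq_eq_of_imaginary_root heq) with h | h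
  · left; linarith
  · right; linarith

theorem stmt_3 (a α b c : ℝ) (hα : α ≠ 0) (hbc : b * c < 0) (hD : α ^ 2 ≥ a ^ 2)
    (d : ℝ) (hd : d = Real.sqrt (-(b * c)))
    (ω τ : ℝ) (hτ : 0 ≤ τ)
    (heq : Complex.I * ω + α * Complex.exp (-(Complex.I * ω) * τ) + a + Complex.I * d = 0) :
    ω = -d - Real.sqrt (α ^ 2 - a ^ 2) ∨ ω = -d + Real.sqrt (α ^ 2 - a ^ 2) :=
  stmt_3_general a α d ω τ heq
end

section
/- Suppose α ≠ 0, bc < 0, and α² < a². Then the equation λ + α e^{-λτ} + a + i√(-bc) = 0 has no purely imaginary root λ = iω with ω ∈ ℝ, for any τ ≥ 0. -/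
open Complex in
theorem re_add_mul_exp_neg_I_mul (a α d ω τ : ℝ) :
    (I * ω + α * exp (-(I * ω) * τ) + a + I * d).re = α * Real.cos (ω * τ) + a := by
  have hexp : -(I * ω) * τ = ((-(ω * τ) : ℝ) : ℂ) * I := by push_cast; ring
  rw [hexp, exp_mul_I]
  simp only [add_re, mul_re, I_re, I_im, ofReal_re, ofReal_im, ← ofReal_cos, ← ofReal_sin,
    Real.cos_neg]
  ring

theorem sq_le_sq_of_mul_cos_add_eq_zero {a α θ : ℝ} (h : α * Real.cos θ + a = 0) :
    a ^ 2 ≤ α ^ 2 :=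
  calc a ^ 2 = α ^ 2 * Real.cos θ ^ 2 := by rw [eq_neg_of_add_eq_zero_right h]; ring
    _ ≤ α ^ 2 * 1 := by gcongr; exact Real.cos_sq_le_one θ
    _ = α ^ 2 := mul_one _

theorem stmt_4_general (a α : ℝ) (hD : α ^ 2 < a ^ 2)
    (d : ℝ) :
    ∀ τ : ℝ, 0 ≤ τ → ∀ ω : ℝ,
      Complex.I * ω + α * Complex.exp (-(Complex.I * ω) * τ) + a + Complex.I * d ≠ 0 := by
  intro τ _ ω h
  have hre := congrArg Complex.re h
  rw [re_add_mul_exp_neg_I_mul, Complex.zero_re] at hre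
  exact (sq_le_sq_of_mul_cos_add_eq_zero hre).not_gt hD

theorem stmt_4 (a α b c : ℝ) (hα : α ≠ 0) (hbc : b * c < 0) (hD : α ^ 2 < a ^ 2)
    (d : ℝ) (hd : d = Real.sqrt (-(b * c))) :
    ∀ τ : ℝ, 0 ≤ τ → ∀ ω : ℝ,
      Complex.I * ω + α * Complex.exp (-(Complex.I * ω) * τ) + a + Complex.I * d ≠ 0 :=
  stmt_4_general a α hD d
end

section
/- Suppose α > 0, bc < 0, α² > a², and d = √(-bc). If ω₁ = -d - √(α² - a²) and τ = (1/ω₁)(-2nπ - arccos(-a/α)) for a nonnegative integer n, then λ = iω₁ satisfies λ + α e^{-λτ} + a + i d = 0. -/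
/-! Since `ω₁ τ = -(arccos E + 2nπ)`, we get `α e^{-i ω₁ τ} = α (E + i √(1 - E²)) = -a + i √D`,
and the imaginary parts `ω₁ + √D + d` cancel by the choice of `ω₁`. -/

open Complex

theorem Complex.exp_arccos_mul_I {x : ℝ} (hx₁ : -1 ≤ x) (hx₂ : x ≤ 1) :
    exp (Real.arccos x * I) = x + Real.sqrt (1 - x ^ 2) * I := by
  rw [exp_mul_I, ← ofReal_cos, ← ofReal_sin, Real.cos_arccos hx₁ hx₂, Real.sin_arccos]

theorem Complex.mul_exp_arccos_neg_div_mul_I {a α : ℝ} (hα : 0 < α) (ha : |a| ≤ α) :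
    α * exp (Real.arccos (-(a / α)) * I) = -a + Real.sqrt (α ^ 2 - a ^ 2) * I := by
  obtain ⟨hlow, hup⟩ : -1 ≤ a / α ∧ a / α ≤ 1 := by
    rwa [← abs_le, abs_div, abs_of_pos hα, div_le_one hα]
  rw [exp_arccos_mul_I (by linarith) (by linarith)]
  have hsqrt : α * Real.sqrt (1 - (-(a / α)) ^ 2) = Real.sqrt (α ^ 2 - a ^ 2) := by
    rw [show 1 - (-(a / α)) ^ 2 = (α ^ 2 - a ^ 2) / α ^ 2 by field_simp,
      Real.sqrt_div' _ (sq_nonneg α), Real.sqrt_sq hα.le, mul_div_cancel₀ _ hα.ne']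
  have hα' : (α : ℂ) ≠ 0 := ofReal_ne_zero.mpr hα.ne'
  rw [mul_add, ← mul_assoc, ← ofReal_mul α (Real.sqrt _), hsqrt]
  push_cast
  field_simp

theorem stmt_5_general (a α b c : ℝ) (hα : 0 < α) (hD : α ^ 2 > a ^ 2)
    (d D E ω₁ : ℝ) (hd : d = Real.sqrt (-(b * c))) (hDdef : D = α ^ 2 - a ^ 2)
    (hE : E = -(a / α)) (hω₁ : ω₁ = -d - Real.sqrt D)
    (n : ℕ) (τ : ℝ)
    (hτ : τ = (1 / ω₁) * (-(2 * n * Real.pi) - Real.arccos E)) :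
    Complex.I * ω₁ + α * Complex.exp (-(Complex.I * ω₁) * τ) + a + Complex.I * d = 0 := by
  -- `d ≥ 0` keeps `ω₁` away from `0`, where `1 / ω₁` would be the junk value `0`.
  have hω₁_ne : (ω₁ : ℂ) ≠ 0 := by
    have : 0 < Real.sqrt D := Real.sqrt_pos.mpr (by linarith)
    have : 0 ≤ d := hd ▸ Real.sqrt_nonneg _
    exact ofReal_ne_zero.mpr (by linarith)
  have hphase : -(I * ω₁) * τ = Real.arccos E * I + n * (2 * Real.pi * I) := by
    rw [hτ]
    push_cast
    field_simp
    ring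
  rw [hphase, exp_add, exp_nat_mul_two_pi_mul_I, mul_one, hE,
    mul_exp_arccos_neg_div_mul_I hα (abs_le_of_sq_le_sq hD.le hα.le), ← hDdef, hω₁]
  push_cast
  ring

theorem stmt_5 (a α b c : ℝ) (hα : 0 < α) (hbc : b * c < 0) (hD : α ^ 2 > a ^ 2)
    (d D E ω₁ : ℝ) (hd : d = Real.sqrt (-(b * c))) (hDdef : D = α ^ 2 - a ^ 2)
    (hE : E = -(a / α)) (hω₁ : ω₁ = -d - Real.sqrt D)
    (n : ℕ) (τ : ℝ)
    (hτ : τ = (1 / ω₁) * (-(2 * n * Real.pi) - Real.arccos E)) :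
    Complex.I * ω₁ + α * Complex.exp (-(Complex.I * ω₁) * τ) + a + Complex.I * d = 0 :=
  stmt_5_general a α b c hα hD d D E ω₁ hd hDdef hE hω₁ n τ hτ
end

section
/- Suppose λ = λ(τ) is a differentiable branch of roots of λ + α e^{-λτ} + a + i d = 0 near a point where λ(τ) = iω is purely imaginary, ω ∈ ℝ, and (1 + aτ)² + τ²(ω + d)² ≠ 0. Then Re(dλ/dτ) at λ = iω equals ω(ω + d) / ((1 + aτ)² + τ²(ω + d)²). -/
/-! Differentiating the characteristic equation along the branch gives
`(1 + τ (λ + a + i d)) λ' = -λ (λ + a + i d)`, because `α e^{-λτ} = -(λ + a + i d)` on the branch.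
At `λ = iω` the factor `1 + τ (iω + a + i d)` has squared modulus `(1 + aτ)² + τ²(ω + d)²`,
and the real part of the resulting quotient collapses to `ω (ω + d)` over that modulus. -/

open Complex Filter Topology

theorem one_add_mul_mul_deriv_eq_of_eventually_delay_root {lam : ℝ → ℂ} {lam' α b : ℂ}
    {τ : ℝ} (hderiv : HasDerivAt lam lam' τ)
    (hroot : ∀ᶠ s in 𝓝 τ, lam s + α * exp (-lam s * s) + b = 0) :
    (1 + (τ : ℂ) * (lam τ + b)) * lam' = -lam τ * (lam τ + b) := by
  have hF : HasDerivAt (fun s : ℝ => lam s + α * exp (-lam s * (s : ℂ)) + b)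
      (lam' + α * (exp (-lam τ * τ) * (-lam' * τ + -lam τ * 1))) τ :=
    (hderiv.add ((hderiv.neg.mul (hasDerivAt_id τ).ofReal_comp).cexp.const_mul α)).add_const b
  have hF' : lam' + α * (exp (-lam τ * τ) * (-lam' * τ + -lam τ * 1)) = 0 :=
    hF.unique ((hasDerivAt_const τ (0 : ℂ)).congr_of_eventuallyEq hroot)
  have hexp : α * exp (-lam τ * τ) = -(lam τ + b) := by
    linear_combination hroot.self_of_nhds
  linear_combination hF' - (-lam' * τ + -lam τ) * hexp

theorem normSq_one_add_mul_I_mul_add (a d τ ω : ℝ) :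
    normSq (1 + τ * (I * ω + (a + I * d))) = (1 + a * τ) ^ 2 + τ ^ 2 * (ω + d) ^ 2 := by
  simp only [normSq_apply, add_re, one_re, mul_re, ofReal_re, I_re, zero_mul, I_im, ofReal_im,
    mul_zero, sub_self, add_zero, zero_add, add_im, mul_im, one_mul, sub_zero, one_im]
  ring

/-- When the denominator vanishes, both sides are `0` (`x / 0 = 0`). -/
theorem re_neg_I_mul_mul_div_one_add_mul (a d τ ω : ℝ) :
    (-(I * ω) * (I * ω + (a + I * d)) / (1 + τ * (I * ω + (a + I * d)))).re =
      ω * (ω + d) / ((1 + a * τ) ^ 2 + τ ^ 2 * (ω + d) ^ 2) := by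
  rw [div_re, normSq_one_add_mul_I_mul_add, ← add_div]
  congr 1
  simp only [neg_mul, neg_re, mul_re, I_re, ofReal_re, zero_mul, I_im, ofReal_im, mul_zero,
    sub_self, add_re, add_zero, zero_add, mul_im, one_mul, add_im, zero_sub, neg_neg, one_re, sub_zero,
    neg_im, one_im]
  ring

theorem stmt_8_general (a α d τ ω : ℝ)
    (lam : ℝ → ℂ) (lam' : ℂ)
    (hderiv : HasDerivAt lam lam' τ)
    (hroot : ∀ᶠ s in nhds τ,
      lam s + α * Complex.exp (-lam s * s) + a + Complex.I * d = 0)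
    (hval : lam τ = Complex.I * ω)
    (hden : (1 + a * τ) ^ 2 + τ ^ 2 * (ω + d) ^ 2 ≠ 0) :
    lam'.re = ω * (ω + d) / ((1 + a * τ) ^ 2 + τ ^ 2 * (ω + d) ^ 2) := by
  have hkey := one_add_mul_mul_deriv_eq_of_eventually_delay_root (α := α) (b := a + I * d)
    hderiv (hroot.mono fun s hs => by rw [← add_assoc, hs])
  rw [hval] at hkey
  have hne : 1 + τ * (I * ω + (a + I * d)) ≠ 0 := by
    rw [← normSq_pos, normSq_one_add_mul_I_mul_add]
    positivity
  rw [eq_div_of_mul_eq hne ((mul_comm _ _).trans hkey), re_neg_I_mul_mul_div_one_add_mul]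

theorem stmt_8 (a α d τ ω : ℝ) (hτ : 0 ≤ τ)
    (lam : ℝ → ℂ) (lam' : ℂ)
    (hderiv : HasDerivAt lam lam' τ)
    (hroot : ∀ᶠ s in nhds τ,
      lam s + α * Complex.exp (-lam s * s) + a + Complex.I * d = 0)
    (hval : lam τ = Complex.I * ω)
    (hden : (1 + a * τ) ^ 2 + τ ^ 2 * (ω + d) ^ 2 ≠ 0) :
    lam'.re = ω * (ω + d) / ((1 + a * τ) ^ 2 + τ ^ 2 * (ω + d) ^ 2) :=
  stmt_8_general a α d τ ω lam lam' hderiv hroot hval hden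
end

section
/- Let 0 < √D < d, E ∈ (-1,1), and k = ⌊d·arccos(E)/(2√D π)⌋. With r_{1,n}, r_{2,n} as in the case α > 0 (r_{1,n} = (-2nπ - arccos E)/ω₁, r_{2,n} = (-2(n+1)π + arccos E)/ω₂, ω₁ = -d-√D, ω₂ = -d+√D), one has r_{1,n} - r_{2,n-1} > 0 for 1 ≤ n ≤ k and r_{1,n} - r_{2,n-1} < 0 for n ≥ k+1, provided d·arccos(E)/(2√D π) is not an integer. -/
open Real

section

variable {a c d s t : ℝ}

lemma div_add_sub_div_sub_eq (hs : 0 < s) (hsd : s < d) (hc : 0 < c) :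
    (2 * t * c + a) / (d + s) - (2 * t * c - a) / (d - s)
      = 4 * c * s * (d * a / (2 * s * c) - t) / ((d + s) * (d - s)) := by
  have hds : d - s ≠ 0 := by linarith
  have hds' : d + s ≠ 0 := by linarith
  field_simp
  ring

lemma div_add_sub_div_sub_pos (hs : 0 < s) (hsd : s < d) (hc : 0 < c)
    (ht : t < d * a / (2 * s * c)) :
    0 < (2 * t * c + a) / (d + s) - (2 * t * c - a) / (d - s) := by
  rw [div_add_sub_div_sub_eq hs hsd hc]
  have hgap : 0 < d * a / (2 * s * c) - t := sub_pos.mpr ht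
  have hden : 0 < (d + s) * (d - s) := mul_pos (by linarith) (by linarith)
  positivity

lemma div_add_sub_div_sub_neg (hs : 0 < s) (hsd : s < d) (hc : 0 < c)
    (ht : d * a / (2 * s * c) < t) :
    (2 * t * c + a) / (d + s) - (2 * t * c - a) / (d - s) < 0 := by
  rw [div_add_sub_div_sub_eq hs hsd hc]
  have hden : 0 < (d + s) * (d - s) := mul_pos (by linarith) (by linarith)
  exact div_neg_of_neg_of_pos (mul_neg_of_pos_of_neg (by positivity) (sub_neg.mpr ht)) hden

end

theorem stmt_14_general (D d E : ℝ) (hD : 0 < Real.sqrt D) (hdD : Real.sqrt D < d)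
    (hnotint : ¬ ∃ m : ℤ, d * Real.arccos E / (2 * Real.sqrt D * Real.pi) = m)
    (k : ℤ) (hk : k = ⌊d * Real.arccos E / (2 * Real.sqrt D * Real.pi)⌋)
    (ω₁ ω₂ : ℝ) (hω₁ : ω₁ = -d - Real.sqrt D) (hω₂ : ω₂ = -d + Real.sqrt D)
    (r₁ r₂ : ℕ → ℝ)
    (hr₁ : ∀ n : ℕ, r₁ n = (-(2 * n * Real.pi) - Real.arccos E) / ω₁)
    (hr₂ : ∀ n : ℕ, r₂ n = (-(2 * (n + 1) * Real.pi) + Real.arccos E) / ω₂) :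
    (∀ n : ℕ, 1 ≤ n → (n : ℤ) ≤ k → r₁ n - r₂ (n - 1) > 0) ∧
      (∀ n : ℕ, k + 1 ≤ (n : ℤ) → r₁ n - r₂ (n - 1) < 0) := by
  set s := √D
  set a := arccos E
  set x := d * a / (2 * s * π)
  have hgap : ∀ n : ℕ, 1 ≤ n →
      r₁ n - r₂ (n - 1) = (2 * n * π + a) / (d + s) - (2 * n * π - a) / (d - s) := by
    intro n hn
    rw [hr₁, hr₂, hω₁, hω₂, Nat.cast_sub hn, show -d - s = -(d + s) by ring,
      show -d + s = -(d - s) by ring, div_neg, div_neg]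
    push_cast
    ring
  have hk_lt : (k : ℝ) < x :=
    (hk ▸ Int.floor_le x).lt_of_ne fun h => hnotint ⟨k, h.symm⟩
  have hlt_k : x < k + 1 := hk ▸ Int.lt_floor_add_one x
  have hk_nonneg : 0 ≤ k :=
    hk ▸ Int.floor_nonneg.mpr (by positivity [hD.le.trans_lt hdD |>.le, arccos_nonneg E])
  refine ⟨fun n hn hnk => ?_, fun n hn => ?_⟩
  · rw [hgap n hn]
    exact div_add_sub_div_sub_pos hD hdD pi_pos (lt_of_le_of_lt (by exact_mod_cast hnk) hk_lt)
  · rw [hgap n (by omega)]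
    exact div_add_sub_div_sub_neg hD hdD pi_pos (hlt_k.trans_le (by exact_mod_cast hn))

theorem stmt_14 (D d E : ℝ) (hD : 0 < Real.sqrt D) (hdD : Real.sqrt D < d)
    (hE : E ∈ Set.Ioo (-1 : ℝ) 1)
    (hnotint : ¬ ∃ m : ℤ, d * Real.arccos E / (2 * Real.sqrt D * Real.pi) = m)
    (k : ℤ) (hk : k = ⌊d * Real.arccos E / (2 * Real.sqrt D * Real.pi)⌋)
    (ω₁ ω₂ : ℝ) (hω₁ : ω₁ = -d - Real.sqrt D) (hω₂ : ω₂ = -d + Real.sqrt D)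
    (r₁ r₂ : ℕ → ℝ)
    (hr₁ : ∀ n : ℕ, r₁ n = (-(2 * n * Real.pi) - Real.arccos E) / ω₁)
    (hr₂ : ∀ n : ℕ, r₂ n = (-(2 * (n + 1) * Real.pi) + Real.arccos E) / ω₂) :
    (∀ n : ℕ, 1 ≤ n → (n : ℤ) ≤ k → r₁ n - r₂ (n - 1) > 0) ∧
      (∀ n : ℕ, k + 1 ≤ (n : ℤ) → r₁ n - r₂ (n - 1) < 0) :=
  stmt_14_general D d E hD hdD hnotint k hk ω₁ ω₂ hω₁ hω₂ r₁ r₂ hr₁ hr₂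
end

section
/- Let 0 < √D < d, E ∈ (-1,1), and suppose k = ⌊d·arccos(E)/(2√Dπ)⌋ ≥ 1 with d·arccos(E)/(2√Dπ) ∉ ℤ. Then the interleaving 0 < r_{1,0} < r_{2,0} < r_{1,1} < ⋯ < r_{2,k-1} < r_{1,k} < r_{1,k+1} holds, where r_{1,n} = (-2nπ - arccos E)/(-d - √D) and r_{2,n} = (-2(n+1)π + arccos E)/(-d + √D). -/
/-! With `θ = arccos E ∈ (0, π)` and `s = √D`, clearing the signs gives
`r₁ n = (2nπ + θ)/(d + s)` and `r₂ n = (2(n+1)π - θ)/(d - s)`. Cross-multiplying,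
`r₁ n < r₂ n` reduces to `θ < π`, while `r₂ n < r₁ (n+1)` is equivalent to
`(n+1)·2sπ < dθ`, i.e. `n + 1 < dθ/(2sπ)`; for `n + 1 ≤ k` this holds because
`k = ⌊dθ/(2sπ)⌋` is strictly below the non-integer `dθ/(2sπ)`. -/

open Real

section Interlacing

variable {d s θ : ℝ}

lemma neg_sub_div_neg_sub (a b c e : ℝ) : (-a - b) / (-c - e) = (a + b) / (c + e) := by
  rw [← neg_add', ← neg_add', neg_div_neg_eq]

lemma neg_add_div_neg_add (a b c e : ℝ) : (-a + b) / (-c + e) = (a - b) / (c - e) := by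
  rw [neg_add_eq_sub, neg_add_eq_sub, ← neg_sub a b, ← neg_sub c e, neg_div_neg_eq]

lemma add_div_add_lt_sub_div_sub (hs : 0 ≤ s) (hsd : s < d) (hθ : θ < π) {x : ℝ} (hx : 0 ≤ x) :
    (2 * x * π + θ) / (d + s) < (2 * (x + 1) * π - θ) / (d - s) := by
  rw [div_lt_div_iff₀ (by linarith) (by linarith)]
  nlinarith [mul_nonneg (mul_nonneg hx hs) pi_pos.le, mul_nonneg hs pi_pos.le,
    mul_lt_mul_of_pos_left hθ (hs.trans_lt hsd)]

lemma sub_div_sub_lt_add_div_add_iff (hs : 0 ≤ s) (hsd : s < d) (m : ℝ) :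
    (2 * m * π - θ) / (d - s) < (2 * m * π + θ) / (d + s) ↔ m * (2 * s * π) < d * θ := by
  rw [div_lt_div_iff₀ (by linarith) (by linarith)]
  constructor <;> intro h <;> linarith

end Interlacing

lemma Int.floor_lt_self_of_not_int {x : ℝ} (hx : ¬ ∃ m : ℤ, x = m) : (⌊x⌋ : ℝ) < x :=
  Int.floor_lt_self_iff.2 fun ⟨m, hm⟩ => hx ⟨m, hm.symm⟩

theorem stmt_15_general (D d E : ℝ) (hD : 0 < Real.sqrt D) (hdD : Real.sqrt D < d)
    (hE : E ∈ Set.Ioo (-1 : ℝ) 1)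
    (hnotint : ¬ ∃ m : ℤ, d * Real.arccos E / (2 * Real.sqrt D * Real.pi) = m)
    (k : ℕ) (hk : (k : ℤ) = ⌊d * Real.arccos E / (2 * Real.sqrt D * Real.pi)⌋)
    (r₁ r₂ : ℕ → ℝ)
    (hr₁ : ∀ n : ℕ, r₁ n = (-(2 * n * Real.pi) - Real.arccos E) / (-d - Real.sqrt D))
    (hr₂ : ∀ n : ℕ, r₂ n = (-(2 * (n + 1) * Real.pi) + Real.arccos E) / (-d + Real.sqrt D)) :
    0 < r₁ 0 ∧
      (∀ n : ℕ, n ≤ k - 1 → r₁ n < r₂ n) ∧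
      (∀ n : ℕ, n + 1 ≤ k → r₂ n < r₁ (n + 1)) ∧
      r₁ k < r₁ (k + 1) := by
  set s := √D
  set θ := arccos E
  have hθ : 0 < θ := arccos_pos.2 hE.2
  have hθπ : θ < π := arccos_lt_pi.2 hE.1
  have hds : 0 < d + s := by linarith
  have hR₁ (n : ℕ) : r₁ n = (2 * n * π + θ) / (d + s) := by rw [hr₁, neg_sub_div_neg_sub]
  have hR₂ (n : ℕ) : r₂ n = (2 * (n + 1) * π - θ) / (d - s) := by rw [hr₂, neg_add_div_neg_add]
  have hk_lt : (k : ℝ) * (2 * s * π) < d * θ := by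
    rw [← lt_div_iff₀ (by positivity)]
    exact_mod_cast hk ▸ Int.floor_lt_self_of_not_int hnotint
  refine ⟨?_, fun n _ => ?_, fun n hn => ?_, ?_⟩
  · rw [hR₁]
    exact div_pos (by simpa using hθ) hds
  · rw [hR₁, hR₂]
    exact add_div_add_lt_sub_div_sub hD.le hdD hθπ n.cast_nonneg
  · rw [hR₁, hR₂, Nat.cast_succ, sub_div_sub_lt_add_div_add_iff hD.le hdD]
    have hn' : ((n : ℝ) + 1) ≤ k := by exact_mod_cast hn
    exact (mul_le_mul_of_nonneg_right hn' (by positivity)).trans_lt hk_lt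
  · rw [hR₁, hR₁, Nat.cast_succ]
    gcongr
    linarith [pi_pos]

theorem stmt_15 (D d E : ℝ) (hD : 0 < Real.sqrt D) (hdD : Real.sqrt D < d)
    (hE : E ∈ Set.Ioo (-1 : ℝ) 1)
    (hnotint : ¬ ∃ m : ℤ, d * Real.arccos E / (2 * Real.sqrt D * Real.pi) = m)
    (k : ℕ) (hk : (k : ℤ) = ⌊d * Real.arccos E / (2 * Real.sqrt D * Real.pi)⌋)
    (hk1 : 1 ≤ k)
    (r₁ r₂ : ℕ → ℝ)
    (hr₁ : ∀ n : ℕ, r₁ n = (-(2 * n * Real.pi) - Real.arccos E) / (-d - Real.sqrt D))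
    (hr₂ : ∀ n : ℕ, r₂ n = (-(2 * (n + 1) * Real.pi) + Real.arccos E) / (-d + Real.sqrt D)) :
    0 < r₁ 0 ∧
      (∀ n : ℕ, n ≤ k - 1 → r₁ n < r₂ n) ∧
      (∀ n : ℕ, n + 1 ≤ k → r₂ n < r₁ (n + 1)) ∧
      r₁ k < r₁ (k + 1) :=
  stmt_15_general D d E hD hdD hE hnotint k hk r₁ r₂ hr₁ hr₂
end
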